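/- arXiv:2102.02905 — 3 statements merged into one kernel-verified Lean document; each statement's English description precedes it below -/
import Mathlib

section
/- Let $g$ be a smooth, strictly positive, $2\pi$-periodic function and set $k_{x,0} = \left(\frac{1}{2\pi}\int_0^{2\pi} \frac{1}{g(v)}\,dv\right)^{-1}$ (the harmonic average of $g$). Then there exists a solution $\psi_0 : \mathbb{R} \to \mathbb{R}$ of the ODE $k_{x,0}\,\psi_0'(\zeta) = g(\psi_0(\zeta))$ satisfying $\psi_0(\zeta + 2\pi) = \psi_0(\zeta) + 2\pi$ for all $\zeta$. -/
open Real

theorem stmt2 (g : ℝ → ℝ) (hg : ContDiff ℝ (⊤ : ℕ∞) g)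
    (hper : ∀ x, g (x + 2*π) = g x) (hpos : ∀ x, 0 < g x)
    (kx0 : ℝ) (hkx0 : kx0 = ((1/(2*π)) * ∫ v in (0:ℝ)..(2*π), 1 / g v)⁻¹) :
    ∃ ψ0 : ℝ → ℝ, Differentiable ℝ ψ0 ∧
      (∀ ζ, kx0 * deriv ψ0 ζ = g (ψ0 ζ)) ∧
      (∀ ζ, ψ0 (ζ + 2*π) = ψ0 ζ + 2*π) := by
  have hgc : Continuous g := hg.continuous
  have hgne : ∀ x, g x ≠ 0 := fun x => (hpos x).ne'
  have hinvc : Continuous (fun v => 1 / g v) := by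
    exact continuous_const.div hgc hgne
  have hint : ∀ a b : ℝ, IntervalIntegrable (fun v => 1 / g v) MeasureTheory.volume a b :=
    fun a b => hinvc.intervalIntegrable a b
  set c : ℝ := ∫ v in (0:ℝ)..(2*π), 1 / g v with hc
  have hπ : (0:ℝ) < 2*π := by positivity
  have hcpos : 0 < c := by
    apply intervalIntegral.intervalIntegral_pos_of_pos (hint 0 (2*π)) _ hπ
    intro x; have := hpos x; positivity
  have hk : kx0 = 2*π/c := by
    rw [hkx0]
    rw [mul_inv, one_div, inv_inv, div_eq_mul_inv]
  have hkpos : 0 < kx0 := by rw [hk]; positivity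
  -- F x = kx0 * ∫_0^x 1/g
  set F : ℝ → ℝ := fun x => kx0 * ∫ v in (0:ℝ)..x, 1 / g v with hF
  have hperiodic : Function.Periodic (fun v => 1 / g v) (2*π) := fun x => by
    simp [hper x]
  have hFder : ∀ x, HasDerivAt F (kx0 * (1 / g x)) x := by
    intro x
    exact ((intervalIntegral.integral_hasDerivAt_right (hint 0 x)
      (hinvc.stronglyMeasurableAtFilter _ _) hinvc.continuousAt)).const_mul kx0
  have hFderpos : ∀ x, 0 < kx0 * (1 / g x) := by
    intro x; have := hpos x; positivity
  have hFdiff : Differentiable ℝ F := fun x => (hFder x).differentiableAt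
  have hFmono : StrictMono F := by
    apply strictMono_of_deriv_pos
    intro x; rw [(hFder x).deriv]; exact hFderpos x
  have hFcont : Continuous F := hFdiff.continuous
  -- F(x + 2π) = F x + 2π
  have hFshift : ∀ x, F (x + 2*π) = F x + 2*π := by
    intro x
    have h1 : (∫ v in (0:ℝ)..(x + 2*π), 1 / g v)
        = (∫ v in (0:ℝ)..x, 1 / g v) + ∫ v in x..(x + 2*π), 1 / g v :=
      (intervalIntegral.integral_add_adjacent_intervals (hint 0 x) (hint x _)).symm
    have h2 : (∫ v in x..(x + 2*π), 1 / g v) = c := by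
      rw [hperiodic.intervalIntegral_add_eq x 0]; simp [hc]
    have : F (x + 2*π) = F x + kx0 * c := by
      simp only [hF, h1, h2]; ring
    rw [this, hk]; field_simp
  have hFshiftn : ∀ n : ℕ, F (2*π*n) = F 0 + 2*π*n := by
    intro n
    induction n with
    | zero => simp
    | succ m ih =>
      push_cast
      have h : (2*π*((m:ℝ)+1)) = 2*π*(m:ℝ) + 2*π := by ring
      rw [h, hFshift, ih]; ring
  have hFshiftn' : ∀ n : ℕ, F (-(2*π*n)) = F 0 - 2*π*n := by
    intro n
    induction n with
    | zero => simp
    | succ m ih =>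
      have h := hFshift (-(2*π*(m+1)))
      have he : (-(2*π*(m+1)) + 2*π : ℝ) = -(2*π*m) := by push_cast; ring
      rw [he, ih] at h
      have := h.symm
      push_cast at this ⊢
      linarith
  have hFsurj : Function.Surjective F := by
    intro y
    obtain ⟨n, hn⟩ := exists_nat_gt ((y - F 0)/(2*π))
    obtain ⟨m, hm⟩ := exists_nat_gt ((F 0 - y)/(2*π))
    have h1 : y ≤ F (2*π*n) := by
      rw [hFshiftn]
      have := (div_lt_iff₀ hπ).mp hn
      linarith
    have h2 : F (-(2*π*m)) ≤ y := by
      rw [hFshiftn']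
      have := (div_lt_iff₀ hπ).mp hm
      linarith
    obtain ⟨x, _, hx⟩ := intermediate_value_Icc (by
        have : F (-(2*π*m)) ≤ F (2*π*n) := le_trans h2 h1
        exact (hFmono.le_iff_le).mp this) (hFcont.continuousOn (s := Set.Icc _ _))
      (Set.mem_Icc.mpr ⟨h2, h1⟩)
    exact ⟨x, hx⟩
  set e := StrictMono.orderIsoOfSurjective F hFmono hFsurj with he
  set ψ0 : ℝ → ℝ := fun y => e.symm y with hψ
  have hFψ : ∀ y, F (ψ0 y) = y := fun y =>
    StrictMono.orderIsoOfSurjective_self_symm_apply F hFmono hFsurj y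
  have hψcont : Continuous ψ0 := (e.symm.toHomeomorph).continuous
  have hψder : ∀ ζ, HasDerivAt ψ0 (kx0 * (1 / g (ψ0 ζ)))⁻¹ ζ := by
    intro ζ
    exact HasDerivAt.of_local_left_inverse (hψcont.continuousAt)
      (hFder (ψ0 ζ)) (hFderpos (ψ0 ζ)).ne' (Filter.Eventually.of_forall hFψ)
  refine ⟨ψ0, fun ζ => (hψder ζ).differentiableAt, fun ζ => ?_, fun ζ => ?_⟩
  · rw [(hψder ζ).deriv]
    have h1 := hpos (ψ0 ζ)
    field_simp
  · have h1 : F (ψ0 ζ + 2*π) = ζ + 2*π := by rw [hFshift, hFψ]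
    have h2 : F (ψ0 (ζ + 2*π)) = ζ + 2*π := hFψ _
    exact hFmono.injective (h2.trans h1.symm)
end

section
/- Let $g$ be a smooth, strictly positive, $2\pi$-periodic function, $k_{x,0}$ its harmonic average, and $\psi_0$ a solution of $k_{x,0}\psi_0' = g(\psi_0)$ with $\psi_0(\zeta+2\pi)=\psi_0(\zeta)+2\pi$. Then the function $\psi_1 := \frac{(k_{x,0})^2+k_y^2}{k_{x,0}}\,\log(\psi_0')\,\psi_0'$ satisfies the linear equation $k_{x,0}\psi_1' - g'(\psi_0)\psi_1 = \left((k_{x,0})^2 + k_y^2\right)\psi_0''$ and is $2\pi$-periodic. -/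
open Real

theorem stmt4 (g : ℝ → ℝ) (hg : ContDiff ℝ (⊤ : ℕ∞) g)
    (hper : ∀ x, g (x + 2*π) = g x) (hpos : ∀ x, 0 < g x)
    (ky : ℝ)
    (kx0 : ℝ) (hkx0 : kx0 = ((1/(2*π)) * ∫ v in (0:ℝ)..(2*π), 1 / g v)⁻¹)
    (ψ0 : ℝ → ℝ) (hψ0 : ContDiff ℝ 2 ψ0)
    (hode : ∀ ζ, kx0 * deriv ψ0 ζ = g (ψ0 ζ))
    (hper0 : ∀ ζ, ψ0 (ζ + 2*π) = ψ0 ζ + 2*π)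
    (ψ1 : ℝ → ℝ)
    (hψ1 : ψ1 = fun ζ => ((kx0^2 + ky^2)/kx0) * Real.log (deriv ψ0 ζ) * deriv ψ0 ζ) :
    (∀ ζ, kx0 * deriv ψ1 ζ - deriv g (ψ0 ζ) * ψ1 ζ = (kx0^2 + ky^2) * deriv (deriv ψ0) ζ) ∧
    (∀ ζ, ψ1 (ζ + 2*π) = ψ1 ζ) := by
  -- kx0 > 0
  have hcont : Continuous fun v => 1 / g v :=
    continuous_const.div hg.continuous fun x => (hpos x).ne'
  have hint : IntervalIntegrable (fun v => 1 / g v) MeasureTheory.volume 0 (2*π) :=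
    hcont.intervalIntegrable _ _
  have hIpos : 0 < ∫ v in (0:ℝ)..(2*π), 1 / g v := by
    apply intervalIntegral.intervalIntegral_pos_of_pos hint
    · exact fun x => div_pos one_pos (hpos x)
    · positivity
  have hkpos : 0 < kx0 := by
    rw [hkx0]
    have : 0 < (2*π) := by positivity
    positivity
  have hk0 : kx0 ≠ 0 := hkpos.ne'
  set u := deriv ψ0 with hu
  have hψ0d : Differentiable ℝ ψ0 := hψ0.differentiable (by norm_num)
  have hud : Differentiable ℝ u := by
    have h2 : ContDiff ℝ ((1:ℕ)+1) ψ0 := hψ0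
    exact ((contDiff_succ_iff_deriv.mp h2).2.2.differentiable (by simp))
  have hupos : ∀ ζ, 0 < u ζ := by
    intro ζ
    have := hode ζ
    nlinarith [hpos (ψ0 ζ), hkpos]
  -- differentiated ODE
  have hode' : ∀ ζ, kx0 * deriv u ζ = deriv g (ψ0 ζ) * u ζ := by
    intro ζ
    have hgd : HasDerivAt g (deriv g (ψ0 ζ)) (ψ0 ζ) :=
      (hg.differentiable (by simp) (ψ0 ζ)).hasDerivAt
    have hcomp : HasDerivAt (fun ζ => g (ψ0 ζ)) (deriv g (ψ0 ζ) * u ζ) ζ :=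
      hgd.comp ζ (hψ0d ζ).hasDerivAt
    have hL : HasDerivAt (fun ζ => kx0 * u ζ) (kx0 * deriv u ζ) ζ :=
      ((hud ζ).hasDerivAt).const_mul kx0
    have heq : (fun ζ => kx0 * u ζ) = fun ζ => g (ψ0 ζ) := funext hode
    rw [heq] at hL
    exact hL.unique hcomp
  have hperu : ∀ ζ, u (ζ + 2*π) = u ζ := by
    intro ζ
    apply mul_left_cancel₀ hk0
    rw [hode, hode, hper0, hper]
  set C := (kx0^2 + ky^2)/kx0 with hC
  have hd1 : ∀ ζ, HasDerivAt ψ1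
      (C * (deriv u ζ / u ζ) * u ζ + C * Real.log (u ζ) * deriv u ζ) ζ := by
    intro ζ
    rw [hψ1]
    exact ((((hud ζ).hasDerivAt.log (hupos ζ).ne').const_mul C).mul (hud ζ).hasDerivAt)
  constructor
  · intro ζ
    rw [(hd1 ζ).deriv, hψ1]
    simp only
    rw [mul_assoc C, div_mul_cancel₀ _ (hupos ζ).ne']
    have h1 := hode' ζ
    have : kx0 * C = kx0^2 + ky^2 := by rw [hC]; field_simp
    linear_combination (C * Real.log (u ζ)) * h1 + deriv u ζ * this
  · intro ζ
    rw [hψ1]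
    simp only [hperu ζ]
end

section
/- Let $g$ be a smooth, $2\pi$-periodic, strictly positive function, $k_y > 0$, and let $\mathcal{D}_+ = k_y|\partial_\zeta|$ (the Fourier multiplier with symbol $k_y|\ell|$ on $2\pi$-periodic functions). Suppose $\psi_*$ is a smooth $2\pi$-periodic solution of $\mathcal{D}_+\psi_* = g(\psi_* + \zeta) - k_x$ with $\psi_*'(\zeta) + 1 > 0$ for all $\zeta$. Then $k_x = \frac{1}{2\pi}\int_0^{2\pi} g(\varphi)\,d\varphi$. -/
open Real Complex MeasureTheory intervalIntegral

lemma aux_interchange12 (a : ℤ → ℂ) (ha : Summable fun ℓ => ‖a ℓ‖) (w : ℝ → ℂ) (hw : Continuous w) :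
    (∫ ζ in (0:ℝ)..(2*π), w ζ * ∑' ℓ : ℤ, a ℓ * Complex.exp (Complex.I * ℓ * ζ))
      = ∑' ℓ : ℤ, a ℓ * ∫ ζ in (0:ℝ)..(2*π), w ζ * Complex.exp (Complex.I * ℓ * ζ) := by
  have hpi : (0:ℝ) ≤ 2*π := by positivity
  set F : ℤ → ℝ → ℂ := fun ℓ ζ => w ζ * (a ℓ * Complex.exp (Complex.I * ℓ * ζ)) with hF
  have hFc : ∀ ℓ, Continuous (F ℓ) := by
    intro ℓ
    exact hw.mul (continuous_const.mul (Complex.continuous_exp.comp (by continuity)))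
  have hnorm : ∀ ℓ ζ, ‖F ℓ ζ‖ = ‖w ζ‖ * ‖a ℓ‖ := by
    intro ℓ ζ
    have h1 : ‖Complex.exp (Complex.I * ℓ * ζ)‖ = 1 := by
      rw [Complex.norm_exp]
      simp
    simp only [hF, norm_mul, h1, mul_one]
  obtain ⟨M, hM⟩ := (isCompact_Icc : IsCompact (Set.Icc (0:ℝ) (2*π))).exists_bound_of_continuousOn
    (hw.continuousOn.norm)
  have hint : ∀ ℓ, Integrable (F ℓ) (volume.restrict (Set.Ioc (0:ℝ) (2*π))) := fun ℓ =>
    ((hFc ℓ).integrableOn_Ioc)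
  have hbound : ∀ ℓ, (∫ ζ in Set.Ioc (0:ℝ) (2*π), ‖F ℓ ζ‖) ≤ (M * (2*π)) * ‖a ℓ‖ := by
    intro ℓ
    have h1 : ‖∫ ζ in Set.Ioc (0:ℝ) (2*π), ‖F ℓ ζ‖‖ ≤ (M * ‖a ℓ‖) * (volume (Set.Ioc (0:ℝ) (2*π))).toReal := by
      apply MeasureTheory.norm_setIntegral_le_of_norm_le_const measure_Ioc_lt_top
      intro x hx
      rw [Real.norm_of_nonneg (norm_nonneg _), hnorm]
      exact mul_le_mul_of_nonneg_right
        (le_trans (le_abs_self _) (hM x (Set.Ioc_subset_Icc_self hx))) (norm_nonneg _)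
    have h2 : (volume (Set.Ioc (0:ℝ) (2*π))).toReal = 2*π := by
      rw [Real.volume_Ioc, ENNReal.toReal_ofReal (by simp; positivity)]; ring
    rw [h2] at h1
    calc (∫ ζ in Set.Ioc (0:ℝ) (2*π), ‖F ℓ ζ‖) ≤ ‖∫ ζ in Set.Ioc (0:ℝ) (2*π), ‖F ℓ ζ‖‖ := le_abs_self _
      _ ≤ (M * ‖a ℓ‖) * (2*π) := h1
      _ = (M * (2*π)) * ‖a ℓ‖ := by ring
  have hsum' : Summable fun ℓ => ∫ ζ in Set.Ioc (0:ℝ) (2*π), ‖F ℓ ζ‖ := by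
    apply Summable.of_nonneg_of_le (fun ℓ => integral_nonneg (fun ζ => norm_nonneg _)) hbound
    exact ha.mul_left _
  have key := integral_tsum_of_summable_integral_norm hint hsum'
  rw [intervalIntegral.integral_of_le hpi]
  have hpt : ∀ ζ : ℝ, w ζ * ∑' ℓ : ℤ, a ℓ * Complex.exp (Complex.I * ℓ * ζ) = ∑' ℓ : ℤ, F ℓ ζ := by
    intro ζ; rw [← tsum_mul_left]
  rw [MeasureTheory.integral_congr_ae (Filter.Eventually.of_forall fun ζ => hpt ζ), ← key]
  apply tsum_congr
  intro ℓ
  rw [intervalIntegral.integral_of_le hpi]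
  rw [← MeasureTheory.integral_const_mul]
  congr 1; ext ζ; simp [hF]; ring

lemma aux_expint12 (ℓ : ℤ) : (∫ ζ in (0:ℝ)..(2*π), Complex.exp (Complex.I * ℓ * ζ))
    = if ℓ = 0 then (2*π:ℂ) else 0 := by
  rcases eq_or_ne ℓ 0 with h | h
  · subst h; simp
  · rw [if_neg h]
    have hc : (Complex.I * ℓ : ℂ) ≠ 0 := by
      simp [Complex.I_ne_zero, Complex.ext_iff]
      exact_mod_cast h
    have := integral_exp_mul_complex (a := 0) (b := 2*π) hc
    simp only [mul_assoc] at this ⊢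
    rw [this]
    have h2 : Complex.exp (Complex.I * ((ℓ:ℂ) * ((2*π:ℝ):ℂ))) = 1 := by
      have := Complex.exp_int_mul_two_pi_mul_I ℓ
      rw [← this]; push_cast; ring_nf
    rw [h2]; simp

lemma aux_fourier_coeff12 (c : ℤ → ℂ) (hc : Summable fun m => ‖c m‖) (f : ℝ → ℂ)
    (hrep : ∀ ζ : ℝ, f ζ = ∑' m : ℤ, c m * Complex.exp (Complex.I * m * ζ)) (ℓ : ℤ) :
    (∫ ζ in (0:ℝ)..(2*π), f ζ * Complex.exp (Complex.I * ℓ * ζ)) = 2*π * c (-ℓ) := by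
  have h1 : (∫ ζ in (0:ℝ)..(2*π), f ζ * Complex.exp (Complex.I * ℓ * ζ))
      = ∫ ζ in (0:ℝ)..(2*π), Complex.exp (Complex.I * ℓ * ζ) * ∑' m : ℤ, c m * Complex.exp (Complex.I * m * ζ) := by
    apply intervalIntegral.integral_congr; intro ζ _; dsimp only; rw [hrep ζ]; ring
  rw [h1, aux_interchange12 c hc (fun ζ : ℝ => Complex.exp (Complex.I * ℓ * ζ)) (by continuity)]
  have h2 : ∀ m : ℤ, (∫ ζ in (0:ℝ)..(2*π), Complex.exp (Complex.I * ℓ * ζ) * Complex.exp (Complex.I * m * ζ))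
      = if ℓ + m = 0 then (2*π:ℂ) else 0 := by
    intro m
    rw [← aux_expint12 (ℓ+m)]
    apply intervalIntegral.integral_congr; intro ζ _; dsimp only
    rw [← Complex.exp_add]; congr 1; push_cast; ring
  have h3 : (∑' m : ℤ, c m * ∫ ζ in (0:ℝ)..(2*π), Complex.exp (Complex.I * ℓ * ζ) * Complex.exp (Complex.I * m * ζ))
      = ∑' m : ℤ, c m * (if ℓ + m = 0 then (2*π:ℂ) else 0) := by
    apply tsum_congr; intro m; rw [h2]
  rw [h3, tsum_eq_single (-ℓ) (by intro m hm; rw [if_neg (by omega)]; ring)]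
  rw [if_pos (by ring)]; ring

lemma aux_parts12 (ψ : ℝ → ℝ) (hψ : ContDiff ℝ (⊤ : ℕ∞) ψ) (hψper : ψ (2*π) = ψ 0) (ℓ : ℤ) :
    (∫ ζ in (0:ℝ)..(2*π), ((deriv ψ ζ : ℝ) : ℂ) * Complex.exp (Complex.I * ℓ * ζ))
      = -(Complex.I * ℓ) * ∫ ζ in (0:ℝ)..(2*π), ((ψ ζ : ℝ) : ℂ) * Complex.exp (Complex.I * ℓ * ζ) := by
  set u : ℝ → ℂ := fun ζ => ((ψ ζ : ℝ) : ℂ) with hu_def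
  set v : ℝ → ℂ := fun ζ => Complex.exp (Complex.I * ℓ * ζ) with hv_def
  set u' : ℝ → ℂ := fun ζ => ((deriv ψ ζ : ℝ) : ℂ) with hu'_def
  set v' : ℝ → ℂ := fun ζ => Complex.exp (Complex.I * ℓ * ζ) * (Complex.I * ℓ) with hv'_def
  have hu : ∀ x ∈ Set.uIcc (0:ℝ) (2*π), HasDerivAt u (u' x) x := fun x _ =>
    (((hψ.differentiable (by simp)) x).hasDerivAt).ofReal_comp
  have hv : ∀ x ∈ Set.uIcc (0:ℝ) (2*π), HasDerivAt v (v' x) x := by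
    intro x _
    have : HasDerivAt (fun z : ℂ => Complex.exp (Complex.I * ℓ * z))
        (Complex.exp (Complex.I * ℓ * x) * (Complex.I * ℓ)) (x:ℂ) := by
      simpa using (((hasDerivAt_id (x:ℂ)).const_mul (Complex.I * ℓ)).cexp)
    exact this.comp_ofReal
  have hcu' : Continuous u' := Complex.continuous_ofReal.comp (hψ.continuous_deriv (by simp))
  have hcv' : Continuous v' := by
    apply Continuous.mul _ continuous_const
    exact Complex.continuous_exp.comp (by continuity)
  have key := intervalIntegral.integral_deriv_mul_eq_sub hu hv
    (hcu'.intervalIntegrable _ _) (hcv'.intervalIntegrable _ _)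
  have hzero : u (2*π) * v (2*π) - u 0 * v 0 = 0 := by
    have hv2 : v (2*π) = 1 := by
      rw [hv_def]
      have := Complex.exp_int_mul_two_pi_mul_I ℓ
      rw [← this]; push_cast; ring_nf
    have hv0 : v 0 = 1 := by simp [hv_def]
    rw [hv2, hv0, hu_def]; simp [hψper]
  rw [hzero] at key
  have hsplit : (∫ ζ in (0:ℝ)..(2*π), u' ζ * v ζ + u ζ * v' ζ)
      = (∫ ζ in (0:ℝ)..(2*π), u' ζ * v ζ) + ∫ ζ in (0:ℝ)..(2*π), u ζ * v' ζ := by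
    apply intervalIntegral.integral_add
    · exact ((hcu'.mul (Complex.continuous_exp.comp (by continuity))).intervalIntegrable _ _)
    · exact (((Complex.continuous_ofReal.comp hψ.continuous).mul hcv').intervalIntegrable _ _)
  rw [hsplit] at key
  have huv' : (∫ ζ in (0:ℝ)..(2*π), u ζ * v' ζ)
      = (Complex.I * ℓ) * ∫ ζ in (0:ℝ)..(2*π), u ζ * v ζ := by
    rw [← intervalIntegral.integral_const_mul]
    apply intervalIntegral.integral_congr; intro ζ _; dsimp only; ring
  rw [huv'] at key
  linear_combination key
theorem stmt12 (g : ℝ → ℝ) (hg : ContDiff ℝ (⊤ : ℕ∞) g)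
    (hper : ∀ x, g (x + 2*π) = g x) (hpos : ∀ x, 0 < g x)
    (ky kx : ℝ) (hky : 0 < ky)
    (ψ : ℝ → ℝ) (hψ : ContDiff ℝ (⊤ : ℕ∞) ψ) (hψper : ∀ ζ, ψ (ζ + 2*π) = ψ ζ)
    (c : ℤ → ℂ) (hsum : Summable fun ℓ : ℤ => (|(ℓ : ℝ)|) * ‖c ℓ‖)
    (hrep : ∀ ζ : ℝ, (ψ ζ : ℂ) = ∑' ℓ : ℤ, c ℓ * Complex.exp (Complex.I * ℓ * ζ))
    (heq : ∀ ζ : ℝ,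
      (∑' ℓ : ℤ, ((ky * |(ℓ : ℝ)| : ℝ) : ℂ) * c ℓ * Complex.exp (Complex.I * ℓ * ζ))
        = ((g (ψ ζ + ζ) - kx : ℝ) : ℂ))
    (hmono : ∀ ζ, deriv ψ ζ + 1 > 0) :
    kx = (1/(2*π)) * ∫ φ in (0:ℝ)..(2*π), g φ := by
  have hπ : (0:ℝ) < π := Real.pi_pos
  have hψd : Differentiable ℝ ψ := hψ.differentiable (by simp)
  have hψ' : Continuous (deriv ψ) := hψ.continuous_deriv (by simp)
  have hψper' : ψ (2*π) = ψ 0 := by simpa using hψper 0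
  -- summability of coefficients
  have hc : Summable fun m : ℤ => ‖c m‖ := by
    apply Summable.of_norm_bounded_eventually hsum
    rw [Filter.eventually_cofinite]
    apply Set.Finite.subset (Set.finite_singleton (0:ℤ))
    intro ℓ hℓ
    simp only [Set.mem_setOf_eq, not_le, norm_norm] at hℓ
    by_contra h0
    have h1 : (1:ℝ) ≤ |(ℓ:ℝ)| := by
      have : ℓ ≠ 0 := by simpa using h0
      rw [← Int.cast_abs]; exact_mod_cast Int.one_le_abs (by omega)
    nlinarith [norm_nonneg (c ℓ), hℓ]
  set a : ℤ → ℂ := fun ℓ => ((ky * |(ℓ:ℝ)| : ℝ) : ℂ) * c ℓ with ha_def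
  have haS : Summable fun ℓ => ‖a ℓ‖ := by
    apply Summable.of_nonneg_of_le (fun ℓ => norm_nonneg _) _ (hsum.mul_left ky)
    intro ℓ
    have heq' : ‖a ℓ‖ = ky * (|(ℓ:ℝ)| * ‖c ℓ‖) := by
      rw [ha_def]
      rw [norm_mul, Complex.norm_real, Real.norm_eq_abs, abs_mul, _root_.abs_abs,
        _root_.abs_of_nonneg hky.le, mul_assoc]
    exact le_of_eq heq'
  have htsum_eq : ∀ ζ : ℝ, (∑' ℓ : ℤ, ((ky * |(ℓ : ℝ)| : ℝ) : ℂ) * c ℓ * Complex.exp (Complex.I * ℓ * ζ))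
      = ∑' ℓ : ℤ, a ℓ * Complex.exp (Complex.I * ℓ * ζ) := by
    intro ζ; apply tsum_congr; intro ℓ; rw [ha_def]
  set G : ℝ → ℝ := fun ζ => g (ψ ζ + ζ) - kx with hG_def
  have hGc : Continuous G := ((hg.continuous.comp (hψ.continuous.add continuous_id)).sub continuous_const)
  have hGrep : ∀ ζ : ℝ, ((G ζ : ℝ) : ℂ) = ∑' ℓ : ℤ, a ℓ * Complex.exp (Complex.I * ℓ * ζ) := by
    intro ζ; rw [hG_def, ← heq ζ, htsum_eq]
  -- part B : ∫ G = 0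
  have hB : (∫ ζ in (0:ℝ)..(2*π), G ζ) = 0 := by
    have h1 : ((∫ ζ in (0:ℝ)..(2*π), G ζ : ℝ) : ℂ)
        = ∫ ζ in (0:ℝ)..(2*π), (1:ℂ) * ∑' ℓ : ℤ, a ℓ * Complex.exp (Complex.I * ℓ * ζ) := by
      rw [← intervalIntegral.integral_ofReal]
      apply intervalIntegral.integral_congr; intro ζ _; dsimp only
      rw [hGrep ζ, one_mul]
    have hkey := aux_interchange12 a haS (fun _ : ℝ => (1:ℂ)) continuous_const
    rw [hkey] at h1
    have h2 : (∑' ℓ : ℤ, a ℓ * ∫ ζ in (0:ℝ)..(2*π), (1:ℂ) * Complex.exp (Complex.I * ℓ * ζ)) = 0 := by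
      have hz : ∀ ℓ : ℤ, (a ℓ * ∫ ζ in (0:ℝ)..(2*π), (1:ℂ) * Complex.exp (Complex.I * ℓ * ζ)) = 0 := by
        intro ℓ
        have h3 : (∫ ζ in (0:ℝ)..(2*π), (1:ℂ) * Complex.exp (Complex.I * ℓ * ζ))
          = if ℓ = 0 then (2*π:ℂ) else 0 := by
          rw [← aux_expint12 ℓ]
          apply intervalIntegral.integral_congr; intro ζ _; dsimp only; rw [one_mul]
        rw [h3]
        rcases eq_or_ne ℓ 0 with h | h
        · subst h; rw [ha_def]; simp
        · rw [if_neg h, mul_zero]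
      rw [tsum_congr hz, tsum_zero]
    rw [h2] at h1
    exact_mod_cast h1
  -- part A : ∫ (deriv ψ) * G = 0
  have hA : (∫ ζ in (0:ℝ)..(2*π), deriv ψ ζ * G ζ) = 0 := by
    have h1 : ((∫ ζ in (0:ℝ)..(2*π), deriv ψ ζ * G ζ : ℝ) : ℂ)
        = ∫ ζ in (0:ℝ)..(2*π), ((deriv ψ ζ : ℝ) : ℂ) * ∑' ℓ : ℤ, a ℓ * Complex.exp (Complex.I * ℓ * ζ) := by
      rw [← intervalIntegral.integral_ofReal]
      apply intervalIntegral.integral_congr; intro ζ _; dsimp only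
      rw [← hGrep ζ]; push_cast; ring
    rw [aux_interchange12 a haS (fun ζ => ((deriv ψ ζ : ℝ) : ℂ))
      (Complex.continuous_ofReal.comp hψ')] at h1
    have h2 : (∑' ℓ : ℤ, a ℓ * ∫ ζ in (0:ℝ)..(2*π), ((deriv ψ ζ : ℝ) : ℂ) * Complex.exp (Complex.I * ℓ * ζ)) = 0 := by
      have hterm : ∀ ℓ : ℤ, (a ℓ * ∫ ζ in (0:ℝ)..(2*π), ((deriv ψ ζ : ℝ) : ℂ) * Complex.exp (Complex.I * ℓ * ζ))
          = a ℓ * (-(Complex.I * ℓ) * (2*π * c (-ℓ))) := by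
        intro ℓ
        rw [aux_parts12 ψ hψ hψper' ℓ,
          aux_fourier_coeff12 c hc (fun ζ => ((ψ ζ : ℝ) : ℂ)) hrep ℓ]
      rw [tsum_congr hterm]
      set f : ℤ → ℂ := fun ℓ => a ℓ * (-(Complex.I * ℓ) * (2*π * c (-ℓ))) with hf_def
      have hneg : ∀ ℓ, f (-ℓ) = - f ℓ := by
        intro ℓ
        rw [hf_def, ha_def]; dsimp only
        push_cast
        rw [abs_neg]
        ring
      have he := (Equiv.neg ℤ).tsum_eq f
      have he2 : (∑' ℓ : ℤ, f (-ℓ)) = ∑' ℓ, f ℓ := by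
        rw [← he]; rfl
      rw [tsum_congr hneg, tsum_neg] at he2
      have h2z : (2:ℂ) * ∑' ℓ, f ℓ = 0 := by linear_combination - he2
      exact (mul_eq_zero.mp h2z).resolve_left two_ne_zero
    rw [h2] at h1
    exact_mod_cast h1
  -- combine: ∫ G * (deriv ψ + 1) = 0
  have hR : (∫ ζ in (0:ℝ)..(2*π), (deriv ψ ζ + 1) * G ζ) = 0 := by
    have hsplit : (∫ ζ in (0:ℝ)..(2*π), (deriv ψ ζ + 1) * G ζ)
        = (∫ ζ in (0:ℝ)..(2*π), deriv ψ ζ * G ζ) + ∫ ζ in (0:ℝ)..(2*π), G ζ := by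
      rw [← intervalIntegral.integral_add (f := fun ζ => deriv ψ ζ * G ζ) ((hψ'.mul hGc).intervalIntegrable _ _)
        (hGc.intervalIntegrable _ _)]
      apply intervalIntegral.integral_congr; intro ζ _; dsimp only; ring
    rw [hsplit, hA, hB, add_zero]
  -- change of variables
  have hf : ∀ x ∈ Set.uIcc (0:ℝ) (2*π), HasDerivAt (fun ζ => ψ ζ + ζ) (deriv ψ x + 1) x :=
    fun x _ => (hψd x).hasDerivAt.add (hasDerivAt_id x)
  have hCV : (∫ ζ in (0:ℝ)..(2*π), (deriv ψ ζ + 1) * g (ψ ζ + ζ)) = ∫ φ in (0:ℝ)..(2*π), g φ := by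
    have h1 := intervalIntegral.integral_comp_smul_deriv hf
      ((hψ'.add continuous_const).continuousOn) hg.continuous
    simp only [smul_eq_mul, Function.comp] at h1
    rw [h1]
    have h2 : ψ 0 + 0 = ψ 0 := by ring
    have h3 : ψ (2*π) + 2*π = ψ 0 + 2*π := by rw [hψper']
    rw [h2, h3]
    have hperiodic : Function.Periodic g (2*π) := hper
    have := hperiodic.intervalIntegral_add_eq (ψ 0) 0
    rw [this, zero_add]
  -- FTC for the weight
  have hFTC : (∫ ζ in (0:ℝ)..(2*π), (deriv ψ ζ + 1)) = 2*π := by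
    rw [intervalIntegral.integral_eq_sub_of_hasDerivAt hf
      ((hψ'.add continuous_const).intervalIntegrable _ _)]
    simp [hψper']
  have hfinal : (∫ φ in (0:ℝ)..(2*π), g φ) - kx * (2*π) = 0 := by
    have e1 : (∫ ζ in (0:ℝ)..(2*π), (deriv ψ ζ + 1) * G ζ)
        = (∫ ζ in (0:ℝ)..(2*π), (deriv ψ ζ + 1) * g (ψ ζ + ζ))
          - kx * ∫ ζ in (0:ℝ)..(2*π), (deriv ψ ζ + 1) := by
      have hint1 : IntervalIntegrable (fun ζ => (deriv ψ ζ + 1) * g (ψ ζ + ζ)) volume 0 (2*π) :=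
        (((hψ'.add continuous_const).mul (hg.continuous.comp (hψ.continuous.add continuous_id))).intervalIntegrable _ _)
      have hint2 : IntervalIntegrable (fun ζ => kx * (deriv ψ ζ + 1)) volume 0 (2*π) :=
        ((continuous_const.mul (hψ'.add continuous_const)).intervalIntegrable _ _)
      rw [← intervalIntegral.integral_const_mul,
        ← intervalIntegral.integral_sub hint1 hint2]
      apply intervalIntegral.integral_congr; intro ζ _; dsimp only
      rw [hG_def]; ring
    rw [hR, hCV, hFTC] at e1
    linarith [e1]
  have hπne : π ≠ 0 := ne_of_gt hπ
  field_simp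
  linarith [hfinal]
end
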